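/- arXiv:2004.12736 — 2 statements merged into one kernel-verified Lean document; each statement's English description precedes it below -/
import Mathlib

section
/- For real numbers x ≥ p > 0, the incomplete gamma integral satisfies ∫_x^∞ e^{-y} y^p dy ≤ x^{p+1} e^{-x} / (x - p), where for x = p the right-hand side is interpreted as +∞ (so assume x > p). -/
/-!
Since `log u ≤ u - 1`, for `y ≥ 0` we have `(y / x) ^ p ≤ exp (p * (y / x - 1))`, so the integrand
`exp (-y) * y ^ p` is dominated by the exponential `x ^ p * exp (-p) * exp ((p / x - 1) * y)`.
For `x > p` its rate `p / x - 1` is negative, and its integral over `(x, ∞)` is exactly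
`x ^ (p + 1) * exp (-x) / (x - p)`.
-/

open MeasureTheory Real

namespace Real

lemma rpow_le_rpow_mul_exp {x y p : ℝ} (hx : 0 < x) (hy : 0 ≤ y) (hp : 0 ≤ p) :
    y ^ p ≤ x ^ p * exp (p * (y / x - 1)) := by
  calc y ^ p = x ^ p * (y / x) ^ p := by
        rw [div_rpow hy hx.le, mul_div_cancel₀ _ (rpow_pos_of_pos hx p).ne']
    _ ≤ x ^ p * exp (y / x - 1) ^ p := by
        gcongr
        linarith [add_one_le_exp (y / x - 1)]
    _ = x ^ p * exp (p * (y / x - 1)) := by rw [← exp_mul, mul_comm (y / x - 1)]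

lemma exp_neg_mul_rpow_le {x y p : ℝ} (hx : 0 < x) (hy : 0 ≤ y) (hp : 0 ≤ p) :
    exp (-y) * y ^ p ≤ x ^ p * exp (-p) * exp ((p / x - 1) * y) :=
  calc exp (-y) * y ^ p ≤ exp (-y) * (x ^ p * exp (p * (y / x - 1))) := by
        gcongr
        exact rpow_le_rpow_mul_exp hx hy hp
    _ = x ^ p * exp (-p) * exp ((p / x - 1) * y) := by
        rw [mul_left_comm, ← exp_add, mul_assoc, ← exp_add]
        congr 2
        field_simp
        ring

lemma integrableOn_exp_neg_mul_rpow_Ioi {p : ℝ} (hp : -1 < p) (x : ℝ) (hx : 0 ≤ x) :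
    IntegrableOn (fun y ↦ exp (-y) * y ^ p) (Set.Ioi x) := by
  simpa using (GammaIntegral_convergent (s := p + 1) (by linarith)).mono_set
    (Set.Ioi_subset_Ioi hx)

end Real

theorem stmt2 (x p : ℝ) (hp : 0 < p) (hx : p < x) :
    ∫ y in Set.Ioi x, Real.exp (-y) * y ^ p ≤ x ^ (p + 1) * Real.exp (-x) / (x - p) := by
  have hx0 : 0 < x := hp.trans hx
  have hrate : p / x - 1 < 0 := by rw [sub_neg, div_lt_one hx0]; exact hx
  calc ∫ y in Set.Ioi x, exp (-y) * y ^ p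
      ≤ ∫ y in Set.Ioi x, x ^ p * exp (-p) * exp ((p / x - 1) * y) :=
        setIntegral_mono_on (integrableOn_exp_neg_mul_rpow_Ioi (by linarith) x hx0.le)
          ((integrableOn_exp_mul_Ioi hrate x).const_mul _) measurableSet_Ioi
          fun y hy ↦ exp_neg_mul_rpow_le hx0 (hx0.trans hy).le hp.le
    _ = x ^ p * exp (-p) * (-exp ((p / x - 1) * x) / (p / x - 1)) := by
        rw [integral_const_mul, integral_exp_mul_Ioi hrate]
    _ = x ^ (p + 1) * exp (-x) / (x - p) := by
        have hexp : exp (-p) * exp ((p / x - 1) * x) = exp (-x) := by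
          rw [← exp_add, sub_mul, div_mul_cancel₀ _ hx0.ne']; ring_nf
        have hrate_eq : p / x - 1 = -((x - p) / x) := by field_simp; ring
        rw [mul_div_assoc', mul_neg, mul_assoc, hexp, hrate_eq, neg_div_neg_eq,
          div_div_eq_mul_div, rpow_add_one hx0.ne']
        ring
end

section
/- Let p_n → ∞ be a sequence of positive reals and k_n → ∞ a sequence of integers with liminf (log k_n)/p_n = α. If α > 1, then there exists r ∈ (1, 2] such that r log r − (r−1)α < 0, and consequently k_n^{1−r} · Γ(r p_n + 1)/Γ(p_n + 1)^r → 0 as n → ∞. -/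
open Filter Real Set


open Filter Real

lemma aux_fact_bound (n : ℕ) : (n:ℝ)^n ≤ Real.exp n * n.factorial := by
  induction n with
  | zero => simp
  | succ n ih =>
    have h1 : ((n:ℝ)+1)^n ≤ Real.exp 1 * (n:ℝ)^n := by
      rcases Nat.eq_zero_or_pos n with h | h
      · simp [h]
      · have hn0 : (0:ℝ) < n := by exact_mod_cast h
        have hc : (n:ℝ) * (1/(n:ℝ)) = 1 := mul_one_div_cancel hn0.ne'
        have h2 : ((n:ℝ)+1) ≤ (n:ℝ) * Real.exp (1/(n:ℝ)) := by
          nlinarith [mul_le_mul_of_nonneg_left (Real.add_one_le_exp (1/(n:ℝ))) hn0.le]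
        calc ((n:ℝ)+1)^n ≤ ((n:ℝ) * Real.exp (1/(n:ℝ)))^n := by
              apply pow_le_pow_left₀ (by positivity) h2
          _ = (n:ℝ)^n * Real.exp (1/(n:ℝ))^n := by rw [mul_pow]
          _ = (n:ℝ)^n * Real.exp ((n:ℝ)*(1/(n:ℝ))) := by
              rw [← Real.exp_nat_mul]
          _ = Real.exp 1 * (n:ℝ)^n := by rw [hc]; ring
    have key : ((n:ℝ)+1)^(n+1) ≤ Real.exp ((n:ℝ)+1) * (((n+1).factorial : ℝ)) := by
      have hfe : ((n+1).factorial : ℝ) = ((n:ℝ)+1) * n.factorial := by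
        rw [Nat.factorial_succ]; push_cast; ring
      calc ((n:ℝ)+1)^(n+1) = ((n:ℝ)+1) * ((n:ℝ)+1)^n := by ring
        _ ≤ ((n:ℝ)+1) * (Real.exp 1 * (n:ℝ)^n) :=
            mul_le_mul_of_nonneg_left h1 (by positivity)
        _ ≤ ((n:ℝ)+1) * (Real.exp 1 * (Real.exp n * n.factorial)) := by
            apply mul_le_mul_of_nonneg_left _ (by positivity)
            exact mul_le_mul_of_nonneg_left ih (le_of_lt (Real.exp_pos 1))
        _ = Real.exp ((n:ℝ)+1) * (((n:ℝ)+1) * n.factorial) := by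
            rw [Real.exp_add]; ring
        _ = Real.exp ((n:ℝ)+1) * (((n+1).factorial : ℝ)) := by rw [hfe]
    push_cast
    exact key

open Filter Real Set

-- Lemma A: log Γ(x+t) ≤ log Γ x + t log (x+t), for x ≥ 1, t > 0
lemma aux_gamma_upper {x t : ℝ} (hx : 1 ≤ x) (ht : 0 < t) :
    Real.log (Real.Gamma (x + t)) ≤ Real.log (Real.Gamma x) + t * Real.log (x + t) := by
  have hx0 : (0:ℝ) < x := lt_of_lt_of_le one_pos hx
  have hxt : (0:ℝ) < x + t := by linarith
  have hs := Real.convexOn_log_Gamma.slope_mono_adjacent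
    (mem_Ioi.mpr hx0) (show x + t + 1 ∈ Ioi (0:ℝ) by simp; linarith)
    (show x < x + t by linarith) (show x + t < x + t + 1 by linarith)
  have hG : Real.Gamma (x + t + 1) = (x + t) * Real.Gamma (x + t) :=
    Real.Gamma_add_one hxt.ne'
  have hGpos : 0 < Real.Gamma (x + t) := Real.Gamma_pos_of_pos hxt
  simp only [Function.comp] at hs
  rw [hG, Real.log_mul hxt.ne' hGpos.ne'] at hs
  have hs2 : (Real.log (Real.Gamma (x+t)) - Real.log (Real.Gamma x)) / t ≤ Real.log (x+t) := by
    simpa using hs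
  have := (div_le_iff₀ ht).mp hs2
  linarith

-- Lemma B: log Γ(q+1) ≥ log n! + (q - n) log n for 1 ≤ n ≤ q
lemma aux_gamma_lower {n : ℕ} {q : ℝ} (hn : 1 ≤ n) (hq : (n:ℝ) ≤ q) :
    Real.log (n.factorial) + (q - n) * Real.log n ≤ Real.log (Real.Gamma (q + 1)) := by
  have hn0 : (0:ℝ) < n := by exact_mod_cast hn
  rcases eq_or_lt_of_le hq with h | h
  · rw [← h]
    simp [Real.Gamma_nat_eq_factorial]
  · have hs := Real.convexOn_log_Gamma.slope_mono_adjacent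
      (mem_Ioi.mpr hn0) (show q + 1 ∈ Ioi (0:ℝ) by simp; linarith)
      (show (n:ℝ) < n + 1 by linarith) (show (n:ℝ) + 1 < q + 1 by linarith)
    simp only [Function.comp] at hs
    have hGn : Real.Gamma ((n:ℝ) + 1) = (n:ℝ) * Real.Gamma n := Real.Gamma_add_one hn0.ne'
    have hGnpos : 0 < Real.Gamma (n:ℝ) := Real.Gamma_pos_of_pos hn0
    have hfact : Real.Gamma ((n:ℝ) + 1) = n.factorial := Real.Gamma_nat_eq_factorial n
    rw [hGn, Real.log_mul hn0.ne' hGnpos.ne'] at hs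
    have hs2 : Real.log n ≤ (Real.log (Real.Gamma (q+1)) - Real.log (Real.Gamma ((n:ℝ)+1))) / (q - n) := by
      have e : (n:ℝ) + 1 - n = 1 := by ring
      have e2 : q + 1 - ((n:ℝ) + 1) = q - n := by ring
      rw [e, e2] at hs
      simpa [hGn, Real.log_mul hn0.ne' hGnpos.ne'] using hs
    have hqn : 0 < q - n := by linarith
    have := (le_div_iff₀ hqn).mp hs2
    rw [hfact] at this
    linarith


set_option maxHeartbeats 1000000 in
theorem stmt15 (p : ℕ → ℝ) (k : ℕ → ℕ) (α : ℝ)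
    (hp : Tendsto p atTop atTop) (hppos : ∀ n, 0 < p n)
    (hk : Tendsto k atTop atTop)
    (hα : Filter.liminf (fun n => Real.log (k n) / p n) atTop = α)
    (hα1 : 1 < α) :
    ∃ r ∈ Set.Ioc (1:ℝ) 2, r * Real.log r - (r - 1) * α < 0 ∧
      Tendsto (fun n => (k n : ℝ) ^ (1 - r) *
        Real.Gamma (r * p n + 1) / Real.Gamma (p n + 1) ^ r) atTop (nhds 0) := by
  have hα'1 : 1 < (1 + α) / 2 := by linarith
  have hα'α : (1 + α) / 2 < α := by linarith
  obtain ⟨r, hr1, hr2, hrα, hlogr⟩ :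
      ∃ r : ℝ, 1 < r ∧ r ≤ 2 ∧ r ≤ α ∧ Real.log r ≤ ((1 + α) / 2 - 1) / 2 := by
    refine ⟨min 2 (min α (Real.exp (((1 + α) / 2 - 1) / 2))), ?_, min_le_left _ _,
      le_trans (min_le_right _ _) (min_le_left _ _), ?_⟩
    · apply lt_min one_lt_two
      apply lt_min hα1
      exact Real.one_lt_exp_iff.mpr (by linarith)
    · have h0 : (0:ℝ) < min 2 (min α (Real.exp (((1 + α) / 2 - 1) / 2))) := by
        apply lt_min two_pos
        exact lt_min (by linarith) (Real.exp_pos _)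
      rw [Real.log_le_iff_le_exp h0]
      exact le_trans (min_le_right _ _) (min_le_right _ _)
  have hr0 : (0:ℝ) < r := by linarith
  obtain ⟨c, hc, hcdef⟩ : ∃ c : ℝ, 0 < c ∧ c = (1 + α) / 2 - Real.log r - 1 :=
    ⟨_, by linarith, rfl⟩
  refine ⟨r, ⟨hr1, hr2⟩, ?_, ?_⟩
  · -- r log r - (r-1) α < 0
    have hlt : Real.log r < r - 1 := Real.log_lt_sub_one_of_pos hr0 hr1.ne'
    nlinarith [mul_lt_mul_of_pos_left hlt hr0,
      mul_le_mul_of_nonneg_right hrα (by linarith : (0:ℝ) ≤ r - 1)]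
  · -- the limit
    have hbdd : IsBoundedUnder (· ≥ ·) atTop (fun n => Real.log (k n) / p n) := by
      refine ⟨0, ?_⟩
      rw [eventually_map]
      filter_upwards [hk.eventually_ge_atTop 1] with n hn
      exact div_nonneg (Real.log_nonneg (by exact_mod_cast hn)) (hppos n).le
    have hev3 : ∀ᶠ n in atTop, (1 + α) / 2 < Real.log (k n) / p n :=
      eventually_lt_of_lt_liminf (by rw [hα]; exact hα'α) hbdd
    have h1 : Tendsto (fun n => 3 - c * p n) atTop atBot := by
      have h2 : Tendsto (fun n => -(c * p n)) atTop atBot :=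
        tendsto_neg_atTop_atBot.comp (hp.const_mul_atTop hc)
      have := tendsto_atBot_add_const_left atTop (3:ℝ) h2
      simpa [sub_eq_add_neg] using this
    have h4 : Tendsto (fun n => Real.exp ((r - 1) * (3 - c * p n))) atTop (nhds 0) :=
      Real.tendsto_exp_atBot.comp (h1.const_mul_atBot (by linarith))
    apply tendsto_of_tendsto_of_tendsto_of_le_of_le' tendsto_const_nhds h4
    · -- nonnegativity
      filter_upwards with n
      have hG2 : 0 < Real.Gamma (p n + 1) := Real.Gamma_pos_of_pos (by linarith [hppos n])
      have hG1 : 0 < Real.Gamma (r * p n + 1) :=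
        Real.Gamma_pos_of_pos (by nlinarith [hppos n])
      positivity
    · -- the main bound
      filter_upwards [hp.eventually_ge_atTop 3, hk.eventually_ge_atTop 1, hev3]
        with n hP3 hk1 hkα
      set P : ℝ := p n with hP_def
      set K : ℝ := (k n : ℝ) with hK_def
      have hP0 : 0 < P := hppos n
      clear_value P
      have hK1 : (1:ℝ) ≤ K := by rw [hK_def]; exact_mod_cast hk1
      clear_value K
      have hK0 : (0:ℝ) < K := by linarith
      have hlogK : (1 + α) / 2 * P ≤ Real.log K := by
        have := (lt_div_iff₀ hP0).mp hkα
        linarith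
      set m : ℕ := ⌊P⌋₊ with hm_def
      have hm1 : 1 ≤ m := Nat.le_floor (by exact_mod_cast le_trans (by norm_num) hP3)
      have hmP : (m:ℝ) ≤ P := Nat.floor_le hP0.le
      have hPm1 : P - 1 ≤ (m:ℝ) := by
        have := Nat.lt_floor_add_one P
        linarith
      have hm0 : (0:ℝ) < m := by linarith
      clear_value m
      have hG1 : 0 < Real.Gamma (r * P + 1) := Real.Gamma_pos_of_pos (by nlinarith)
      have hG2 : 0 < Real.Gamma (P + 1) := Real.Gamma_pos_of_pos (by linarith)
      set A : ℝ := Real.log (Real.Gamma (r * P + 1)) with hA_def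
      set B : ℝ := Real.log (Real.Gamma (P + 1)) with hB_def
      clear_value A B
      -- step 1 : upper bound for A
      have step1 : A ≤ B + (r - 1) * P * Real.log (r * P + 1) := by
        have h := aux_gamma_upper (x := P + 1) (t := (r - 1) * P)
          (by linarith) (by nlinarith)
        have e : P + 1 + (r - 1) * P = r * P + 1 := by ring
        rw [e] at h
        simp only [hA_def, hB_def]
        linarith
      -- step 2 : lower bound for B
      have step2 : P * Real.log (P - 1) - P ≤ B := by
        have h1' := aux_gamma_lower (n := m) (q := P) hm1 hmP
        have hb := aux_fact_bound m
        have h2' : (m:ℝ) * Real.log m ≤ (m:ℝ) + Real.log (m.factorial) := by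
          have hl := Real.log_le_log (by positivity) hb
          rw [Real.log_pow, Real.log_mul (Real.exp_ne_zero _)
            (by exact_mod_cast m.factorial_pos.ne' : ((m.factorial :ℝ)) ≠ 0),
            Real.log_exp] at hl
          exact_mod_cast hl
        have hlogm : Real.log (P - 1) ≤ Real.log m := Real.log_le_log (by linarith) hPm1
        have h3' := mul_le_mul_of_nonneg_left hlogm hP0.le
        have e : (m:ℝ) * Real.log m + (P - m) * Real.log m = P * Real.log m := by ring
        simp only [hB_def]
        linarith [h1', h2', h3', hmP, e]
      -- step 5 : log ratio bound
      have step5 : P * (Real.log (r * P + 1) - Real.log (P - 1)) ≤ P * Real.log r + 3 := by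
        have s3 : Real.log (r * P + 1) ≤ Real.log r + Real.log (P + 1) := by
          have hle : r * P + 1 ≤ r * (P + 1) := by nlinarith
          have hl := Real.log_le_log (by positivity) hle
          rwa [Real.log_mul hr0.ne' (by linarith : P + 1 ≠ 0)] at hl
        have s4 : Real.log (P + 1) - Real.log (P - 1) ≤ 2 / (P - 1) := by
          have hpos : (0:ℝ) < (P + 1) / (P - 1) := by
            apply div_pos <;> linarith
          have hl := Real.log_le_sub_one_of_pos hpos
          rw [Real.log_div (by linarith) (by linarith)] at hl
          have e : (P + 1) / (P - 1) - 1 = 2 / (P - 1) := by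
            rw [div_sub_one (by linarith : P - 1 ≠ 0)]
            congr 1
            ring
          linarith [e ▸ hl]
        have s6 : P * (2 / (P - 1)) ≤ 3 := by
          rw [mul_div_assoc', div_le_iff₀ (by linarith : (0:ℝ) < P - 1)]
          linarith
        nlinarith [mul_le_mul_of_nonneg_left (by linarith [s3, s4] :
          Real.log (r * P + 1) - Real.log (P - 1) ≤ Real.log r + 2 / (P - 1)) hP0.le]
      -- combine into the log bound
      have hb1 : (r - 1) * (P * Real.log (P - 1) - P) ≤ (r - 1) * B :=
        mul_le_mul_of_nonneg_left step2 (by linarith)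
      have hb2 : (r - 1) * (P * (Real.log (r * P + 1) - Real.log (P - 1))) ≤
          (r - 1) * (P * Real.log r + 3) :=
        mul_le_mul_of_nonneg_left step5 (by linarith)
      have hb3 : (r - 1) * ((1 + α) / 2 * P) ≤ (r - 1) * Real.log K :=
        mul_le_mul_of_nonneg_left hlogK (by linarith)
      have hL : (1 - r) * Real.log K + A - r * B ≤ (r - 1) * (3 - c * P) := by
        have e : (r - 1) * (3 - c * P) =
            (r - 1) * (P * Real.log r + 3) + (r - 1) * P - (r - 1) * ((1 + α) / 2 * P) := by
          rw [hcdef]; ring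
        rw [e]
        nlinarith [step1, hb1, hb2, hb3]
      have hterm : K ^ (1 - r) * Real.Gamma (r * P + 1) / Real.Gamma (P + 1) ^ r =
          Real.exp ((1 - r) * Real.log K + A - r * B) := by
        rw [Real.rpow_def_of_pos hK0, Real.rpow_def_of_pos hG2,
          ← Real.exp_log hG1, ← Real.exp_add, ← Real.exp_sub]
        congr 1
        simp only [hA_def, hB_def]
        ring
      calc K ^ (1 - r) * Real.Gamma (r * P + 1) / Real.Gamma (P + 1) ^ r
          = Real.exp ((1 - r) * Real.log K + A - r * B) := hterm
        _ ≤ Real.exp ((r - 1) * (3 - c * P)) := Real.exp_le_exp.mpr hL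
end
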